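/- For every graph G without isolated vertices, the induced matching number of the 1-subdivision graph S(G) equals |V(G)| − γ(G), where γ(G) is the domination number of G. -/

import Mathlib

open SimpleGraph CategoryTheory

namespace Paper

variable {V : Type} {W : Type}

/-- The 1-subdivision of a graph `G`: each edge is replaced by a path of
length two, by inserting a new vertex (the edge itself) on every edge. -/
def subdiv (G : SimpleGraph V) : SimpleGraph (V ⊕ G.edgeSet) where
  Adj x y :=
    match x, y with
    | Sum.inl v, Sum.inr e => v ∈ (e : Sym2 V)
    | Sum.inr e, Sum.inl v => v ∈ (e : Sym2 V)
    | _, _ => False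
  symm := by
    constructor
    rintro (v | e) (w | f) h
    · exact h.elim
    · exact h
    · exact h
    · exact h.elim
  loopless := by constructor; rintro (v | e) h <;> exact h.elim

/-- The geometric realization of the independence complex of a graph:
convex combinations of vertices whose support is an independent set. -/
def indRealization (G : SimpleGraph V) : Type :=
  {f : V → ℝ // (∀ v, 0 ≤ f v) ∧ (∑ᶠ v, f v) = 1 ∧
     ∀ u v, f u ≠ 0 → f v ≠ 0 → ¬ G.Adj u v}

instance (G : SimpleGraph V) : TopologicalSpace (indRealization G) := by
  delta indRealization; infer_instance

/-- The singular chain complex of a space, with rational coefficients. -/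
noncomputable def singularChains (X : Type) [TopologicalSpace X] :
    ChainComplex (ModuleCat ℚ) ℕ :=
  (AlgebraicTopology.alternatingFaceMapComplex (ModuleCat ℚ)).obj
    (((SimplicialObject.whiskering _ _).obj (ModuleCat.free ℚ)).obj
      (TopCat.toSSet.obj (TopCat.of X)))

/-- Nontriviality of the `n`-th singular homology with rational coefficients. -/
def homologyNontrivial (X : Type) [TopologicalSpace X] (n : ℕ) : Prop :=
  Nontrivial ((singularChains X).homology n)

/-- Nontriviality of the reduced singular homology (rational coefficients)
in degree `n : ℤ`. -/
def reducedHomologyNontrivial (X : Type) [TopologicalSpace X] : ℤ → Prop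
  | Int.negSucc 0 => IsEmpty X
  | Int.negSucc (_ + 1) => False
  | Int.ofNat 0 => ∃ x y : X, ¬ Joined x y
  | Int.ofNat (n + 1) => homologyNontrivial X (n + 1)

/-- The Castelnuovo–Mumford regularity of a graph: the largest `j` such that
some induced subcomplex of the independence complex has nontrivial reduced
homology in dimension `j - 1`. -/
noncomputable def greg {V : Type} (G : SimpleGraph V) : ℕ :=
  sSup { j : ℕ |
    ∃ S : Set V, reducedHomologyNontrivial (indRealization (G.induce S)) ((j : ℤ) - 1) }

/-- `X, Y : Fin k → Finset V` describe a partition of the vertex set of `G`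
into `k` (not necessarily induced) bicliques with sides `X i` and `Y i`. -/
def IsBicliquePartition (G : SimpleGraph V) (k : ℕ) (X Y : Fin k → Finset V) : Prop :=
  (∀ i, (X i).Nonempty) ∧ (∀ i, Disjoint (X i) (Y i)) ∧
  (∀ i, ∀ x ∈ X i, ∀ y ∈ Y i, G.Adj x y) ∧
  (∀ v : V, ∃! i : Fin k, v ∈ X i ∨ v ∈ Y i)

/-- The biclique vertex partition number `bp G`. -/
noncomputable def bp (G : SimpleGraph V) : ℕ :=
  sInf { k | ∃ X Y : Fin k → Finset V, IsBicliquePartition G k X Y }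

/-- `γ(A, G)`: the least size of a vertex set dominating `A`. -/
noncomputable def domNum (G : SimpleGraph V) (A : Set V) : ℕ :=
  sInf { n | ∃ D : Finset V, D.card = n ∧ ∀ a ∈ A, ∃ d ∈ D, d = a ∨ G.Adj d a }

/-- The domination number `γ(G)`. -/
noncomputable def gamma (G : SimpleGraph V) : ℕ := domNum G Set.univ

/-- The independence domination number `γ^i(G)`: the maximum of `γ(I, G)` over
independent sets `I` consisting of non-isolated vertices. -/
noncomputable def iDom (G : SimpleGraph V) : ℕ :=
  sSup { n | ∃ I : Set V, (∀ v ∈ I, ∃ w, G.Adj v w) ∧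
      (∀ u ∈ I, ∀ v ∈ I, ¬ G.Adj u v) ∧ n = domNum G I }

/-- `M` is an induced matching of `G`. -/
def IsInducedMatching (G : SimpleGraph V) (M : Finset (Sym2 V)) : Prop :=
  ((M : Set (Sym2 V)) ⊆ G.edgeSet) ∧
  ∀ e ∈ M, ∀ f ∈ M, e ≠ f → ∀ u ∈ e, ∀ v ∈ f, u ≠ v ∧ ¬ G.Adj u v

/-- The induced matching number of `G`. -/
noncomputable def imNum (G : SimpleGraph V) : ℕ :=
  sSup { n | ∃ M : Finset (Sym2 V), IsInducedMatching G M ∧ M.card = n }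

/-- A simple vertex: the neighborhoods of its neighbors are linearly
ordered by inclusion. -/
def IsSimpleVertex (G : SimpleGraph V) (x : V) : Prop :=
  ∀ u v : V, G.Adj x u → G.Adj x v →
    G.neighborSet u ⊆ G.neighborSet v ∨ G.neighborSet v ⊆ G.neighborSet u

/-- A bisimplicial edge `uv`: every vertex of `N(u) \ {v}` is adjacent to
every vertex of `N(v) \ {u}`, i.e. `N[e]` induces a complete bipartite graph. -/
def IsBisimplicialEdge (G : SimpleGraph V) (u v : V) : Prop :=
  G.Adj u v ∧ ∀ a b : V, G.Adj u a → a ≠ v → G.Adj v b → b ≠ u → G.Adj a b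

/-- A chordal bipartite graph: bipartite with no induced cycle of length
greater than four. -/
def ChordalBipartite (G : SimpleGraph V) : Prop :=
  G.Colorable 2 ∧ ∀ n : ℕ, 4 < n → IsEmpty (cycleGraph n ↪g G)

/-- Attach a pendant vertex (whisker) `w : W` at the vertex `φ w` for each `w`. -/
def addPendants (G : SimpleGraph V) (φ : W → V) : SimpleGraph (V ⊕ W) where
  Adj x y :=
    match x, y with
    | Sum.inl a, Sum.inl b => G.Adj a b
    | Sum.inl a, Sum.inr w => a = φ w
    | Sum.inr w, Sum.inl a => a = φ w
    | Sum.inr _, Sum.inr _ => False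
  symm := by
    constructor
    rintro (a | w) (b | x) h
    · exact h.symm
    · exact h
    · exact h
    · exact h.elim
  loopless := by
    constructor
    rintro (a | w) h
    · exact G.irrefl h
    · exact h.elim

/-- The closed neighborhood, inside the vertex set `Ws`, of the edge `uv`. -/
def closedEdgeNbhdOn (G : SimpleGraph V) (Ws : Set V) (u v : V) : Set V :=
  {w ∈ Ws | w = u ∨ w = v ∨ G.Adj u w ∨ G.Adj v w}

/-- The vertex sets `B_i` remaining after successively removing the closed
neighborhoods of the edges `e 0, e 1, …`. -/
def remSet (G : SimpleGraph V) (e : ℕ → V × V) : ℕ → Set V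
  | 0 => Set.univ
  | i + 1 => remSet G e i \ closedEdgeNbhdOn G (remSet G e i) (e i).1 (e i).2

/-- A simple vertex of the subgraph induced on `Ws`. -/
def SimpleVertexOn (G : SimpleGraph V) (Ws : Set V) (x : V) : Prop :=
  x ∈ Ws ∧ ∀ u ∈ Ws, ∀ v ∈ Ws, G.Adj x u → G.Adj x v →
    ({a ∈ Ws | G.Adj u a} ⊆ {a ∈ Ws | G.Adj v a} ∨
     {a ∈ Ws | G.Adj v a} ⊆ {a ∈ Ws | G.Adj u a})

/-- A bisimplicial edge of the subgraph induced on `Ws`. -/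
def BisimplicialOn (G : SimpleGraph V) (Ws : Set V) (u v : V) : Prop :=
  u ∈ Ws ∧ v ∈ Ws ∧ G.Adj u v ∧
    ∀ a ∈ Ws, ∀ b ∈ Ws, G.Adj u a → a ≠ v → G.Adj v b → b ≠ u → G.Adj a b

/-- `e 0, …, e (k-1)` is a biclique elimination sequence for `G`. -/
def IsBES (G : SimpleGraph V) (k : ℕ) (e : ℕ → V × V) : Prop :=
  (∀ i < k, BisimplicialOn G (remSet G e i) (e i).1 (e i).2) ∧
  ∀ u ∈ remSet G e k, ∀ v ∈ remSet G e k, ¬ G.Adj u v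

/-- A simple biclique elimination sequence. -/
def IsSimpleBES (G : SimpleGraph V) (k : ℕ) (e : ℕ → V × V) : Prop :=
  IsBES G k e ∧
  ∀ i < k, SimpleVertexOn G (remSet G e i) (e i).1 ∨
           SimpleVertexOn G (remSet G e i) (e i).2

/-- A complete simple biclique elimination sequence: no deletion step ever
leaves an isolated vertex behind. -/
def IsCompleteSBES (G : SimpleGraph V) (k : ℕ) (e : ℕ → V × V) : Prop :=
  IsSimpleBES G k e ∧
  ∀ i < k, ∀ w ∈ remSet G e (i + 1), ∃ w' ∈ remSet G e (i + 1), G.Adj w w'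

/-- `v` is covered by (incident to) an edge of `M`. -/
def coveredBy (M : Finset (Sym2 V)) (v : V) : Prop := ∃ e ∈ M, v ∈ e

/-- The class `Γ`: connected bipartite graphs of minimum degree at least two,
with an induced matching `M` with `|M| > |V|/3` such that every uncovered
vertex is adjacent to endpoints of at least two distinct edges of `M`. -/
def InGamma (G : SimpleGraph V) (M : Finset (Sym2 V)) : Prop :=
  G.Colorable 2 ∧ G.Connected ∧
  (∀ v : V, ∃ w w' : V, w ≠ w' ∧ G.Adj v w ∧ G.Adj v w') ∧
  IsInducedMatching G M ∧
  3 * M.card > Nat.card V ∧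
  (∀ v : V, ¬ coveredBy M v →
    ∃ e ∈ M, ∃ f ∈ M, e ≠ f ∧ (∃ x ∈ e, G.Adj v x) ∧ (∃ y ∈ f, G.Adj v y))

/-! An edge of `S(G)` joins a vertex `a` of `G` to an edge `ε ∋ a` of `G`. Given an induced
matching `M` of `S(G)`, let `A` be the set of vertices of `G` it covers, so `|A| = |M|`. For
`a ∈ A` matched with `ε = au`, the vertex `u` is not in `A`, being adjacent in `S(G)` to the
matched `ε`. Hence `V \ A` dominates `G` and `|M| ≤ |V| - γ(G)`. Conversely, if `D` dominates
`G`, joining every `a ∉ D` to the edge from `a` to a neighbour in `D` gives an induced matching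
of size `|V| - |D|`: such an edge contains no vertex outside `D` other than `a`. -/

def IsDominating (G : SimpleGraph V) (D : Finset V) : Prop :=
  ∀ a, ∃ d ∈ D, d = a ∨ G.Adj d a

lemma gamma_le_card {G : SimpleGraph V} {D : Finset V} (hD : IsDominating G D) :
    gamma G ≤ D.card :=
  Nat.sInf_le ⟨D, rfl, fun a _ => hD a⟩

lemma exists_isDominating_card_eq_gamma [Fintype V] (G : SimpleGraph V) :
    ∃ D : Finset V, IsDominating G D ∧ D.card = gamma G := by
  obtain ⟨D, hcard, hD⟩ := Nat.sInf_mem (s := {n | ∃ D : Finset V, D.card = n ∧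
      ∀ a ∈ (Set.univ : Set V), ∃ d ∈ D, d = a ∨ G.Adj d a})
    ⟨_, Finset.univ, rfl, fun a _ => ⟨a, Finset.mem_univ a, Or.inl rfl⟩⟩
  exact ⟨D, fun a => hD a (Set.mem_univ a), hcard⟩

lemma card_le_card_of_isInducedMatching {α : Type} {H : SimpleGraph α} {M : Finset (Sym2 α)}
    (hM : IsInducedMatching H M) {A : Finset α} (hA : ∀ e ∈ M, ∃ x ∈ A, x ∈ e) :
    M.card ≤ A.card := by
  refine Finset.card_le_card_of_forall_subsingleton (fun e x => x ∈ e) hA ?_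
  rintro x - e ⟨he, hxe⟩ f ⟨hf, hxf⟩
  by_contra hef
  exact (hM.2 e he f hf hef x hxe x hxf).1 rfl

lemma exists_of_mem_edgeSet_subdiv {G : SimpleGraph V} {e : Sym2 (V ⊕ G.edgeSet)}
    (he : e ∈ (subdiv G).edgeSet) :
    ∃ v ε, e = s(Sum.inl v, Sum.inr ε) ∧ v ∈ (ε : Sym2 V) := by
  induction e using Sym2.ind with
  | _ x y =>
    rcases x with v | ε <;> rcases y with w | δ
    · exact he.elim
    · exact ⟨v, δ, rfl, he⟩
    · exact ⟨w, ε, Sym2.eq_swap, he⟩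
    · exact he.elim

lemma isDominating_compl_of_isInducedMatching_subdiv [Fintype V] [DecidableEq V]
    {G : SimpleGraph V} {M : Finset (Sym2 (V ⊕ G.edgeSet))} (hM : IsInducedMatching (subdiv G) M)
    {A : Finset V} (hA : ∀ a ∈ A, ∃ e ∈ M, Sum.inl a ∈ e) : IsDominating G Aᶜ := by
  intro a
  by_cases ha : a ∈ A
  · obtain ⟨e, he, hae⟩ := hA a ha
    obtain ⟨v, ε, rfl, hv⟩ := exists_of_mem_edgeSet_subdiv (hM.1 he)
    obtain rfl : a = v := by simpa using hae
    obtain ⟨u, hε⟩ := Sym2.mem_iff_exists.1 hv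
    have hau : G.Adj a u := G.mem_edgeSet.1 (hε ▸ ε.2)
    refine ⟨u, Finset.mem_compl.2 fun hu => ?_, Or.inr hau.symm⟩
    obtain ⟨f, hf, huf⟩ := hA u hu
    by_cases hfe : f = s(Sum.inl a, Sum.inr ε)
    · subst hfe
      obtain rfl : u = a := by simpa using huf
      exact hau.ne rfl
    · have hnadj := (hM.2 _ he f hf (Ne.symm hfe) (Sum.inr ε) (Sym2.mem_mk_right _ _)
        (Sum.inl u) huf).2
      exact hnadj (show u ∈ (ε : Sym2 V) from hε ▸ Sym2.mem_mk_right _ _)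
  · exact ⟨a, Finset.mem_compl.2 ha, Or.inl rfl⟩

lemma card_add_gamma_le_of_isInducedMatching_subdiv [Fintype V] {G : SimpleGraph V}
    {M : Finset (Sym2 (V ⊕ G.edgeSet))} (hM : IsInducedMatching (subdiv G) M) :
    M.card + gamma G ≤ Fintype.card V := by
  classical
  set A := Finset.univ.filter fun v : V => ∃ e ∈ M, Sum.inl v ∈ e
  have hMA : M.card ≤ A.card := by
    rw [← Finset.card_map (s := A) Function.Embedding.inl]
    refine card_le_card_of_isInducedMatching hM fun e he => ?_
    obtain ⟨v, ε, rfl, -⟩ := exists_of_mem_edgeSet_subdiv (hM.1 he)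
    exact ⟨Sum.inl v, Finset.mem_map_of_mem _ (Finset.mem_filter.2
      ⟨Finset.mem_univ v, _, he, Sym2.mem_mk_left _ _⟩), Sym2.mem_mk_left _ _⟩
  have hγ := gamma_le_card (isDominating_compl_of_isInducedMatching_subdiv hM (A := A)
    fun v hv => (Finset.mem_filter.1 hv).2)
  rw [Finset.card_compl] at hγ
  have := A.card_le_univ
  omega

lemma exists_isInducedMatching_subdiv {ι : Type*} [Fintype ι] {G : SimpleGraph V}
    (v : ι → V) (ε : ι → G.edgeSet) (hmem : ∀ i, v i ∈ (ε i : Sym2 V))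
    (hsep : ∀ i j, v j ∈ (ε i : Sym2 V) → j = i) :
    ∃ M : Finset (Sym2 (V ⊕ G.edgeSet)),
      IsInducedMatching (subdiv G) M ∧ M.card = Fintype.card ι := by
  classical
  have hv : ∀ i j, v i = v j → i = j := fun i j h => (hsep i j (h ▸ hmem i)).symm
  have hε : ∀ i j, ε i = ε j → i = j := fun i j h => (hsep i j (h ▸ hmem j)).symm
  have hinj : Function.Injective fun i => s(Sum.inl (v i), Sum.inr (ε i)) := by
    intro i j hij
    rcases Sym2.eq_iff.1 hij with ⟨h, -⟩ | ⟨h, -⟩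
    · exact hv i j (Sum.inl.inj h)
    · exact (Sum.inl_ne_inr h).elim
  refine ⟨Finset.univ.image _, ⟨?_, ?_⟩, Finset.card_image_of_injective _ hinj⟩
  · intro e he
    obtain ⟨i, -, rfl⟩ := Finset.mem_image.1 he
    exact hmem i
  · intro _ hi _ hj hne x hx y hy
    obtain ⟨i, -, rfl⟩ := Finset.mem_image.1 hi
    obtain ⟨j, -, rfl⟩ := Finset.mem_image.1 hj
    have hij : i ≠ j := fun h => hne (h ▸ rfl)
    rcases Sym2.mem_iff.1 hx with rfl | rfl <;> rcases Sym2.mem_iff.1 hy with rfl | rfl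
    · exact ⟨fun h => hij (hv i j (Sum.inl.inj h)), id⟩
    · exact ⟨Sum.inl_ne_inr, fun h => hij (hsep j i h)⟩
    · exact ⟨Sum.inr_ne_inl, fun h => hij (hsep i j h).symm⟩
    · exact ⟨fun h => hij (hε i j (Sum.inr.inj h)), id⟩

lemma exists_isInducedMatching_subdiv_of_isDominating [Fintype V] {G : SimpleGraph V}
    {D : Finset V} (hD : IsDominating G D) :
    ∃ M : Finset (Sym2 (V ⊕ G.edgeSet)),
      IsInducedMatching (subdiv G) M ∧ M.card = Fintype.card V - D.card := by
  classical
  have hnbr : ∀ a : {a // a ∉ D}, ∃ d ∈ D, G.Adj d a := fun ⟨a, ha⟩ => by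
    obtain ⟨d, hd, rfl | hda⟩ := hD a
    · exact absurd hd ha
    · exact ⟨d, hd, hda⟩
  choose d hdD hadj using hnbr
  obtain ⟨M, hM, hcard⟩ := exists_isInducedMatching_subdiv (G := G) Subtype.val
    (fun a => ⟨s(d a, a), hadj a⟩) (fun a => Sym2.mem_mk_right _ _) fun a b hb => by
      rcases Sym2.mem_iff.1 hb with h | h
      · exact absurd (h ▸ hdD a) b.2
      · exact Subtype.ext h
  exact ⟨M, hM, by simpa using hcard⟩

theorem imNum_subdiv_eq_card_sub_gamma_general {V : Type} [Fintype V]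
    (G : SimpleGraph V) :
    imNum (subdiv G) = Fintype.card V - gamma G := by
  obtain ⟨D, hD, hDcard⟩ := exists_isDominating_card_eq_gamma G
  refine IsGreatest.csSup_eq ⟨?_, ?_⟩
  · obtain ⟨M, hM, hMcard⟩ := exists_isInducedMatching_subdiv_of_isDominating hD
    exact ⟨M, hM, hDcard ▸ hMcard⟩
  · rintro _ ⟨M, hM, rfl⟩
    have := card_add_gamma_le_of_isInducedMatching_subdiv hM
    omega

/-- For a graph without isolated vertices,
`im(S(G)) = |V(G)| - γ(G)`. -/
theorem imNum_subdiv_eq_card_sub_gamma {V : Type} [Fintype V]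
    (G : SimpleGraph V) (h : ∀ v : V, ∃ w : V, G.Adj v w) :
    imNum (subdiv G) = Fintype.card V - gamma G :=
  imNum_subdiv_eq_card_sub_gamma_general G

end Paper
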